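/- Let $m_1, \dots, m_r$ and $k_1, \dots, k_r$ be positive integers with $m_j \geq 3$ for some $j$, and let $x = \sum_{i=1}^r k_i m_i$. Then $2 \prod_{i=1}^r k_i! \cdot m_i^{k_i}$ divides $x!$. -/
import Mathlib

lemma auxA (k m : ℕ) (hm : 0 < m) : Nat.factorial k * m ^ k ∣ Nat.factorial (k * m) := by
  have h := Nat.uniformBell_mul_eq k hm.ne'
  have hdvd : m ^ k ∣ Nat.factorial m ^ k :=
    pow_dvd_pow_of_dvd (Nat.dvd_factorial hm le_rfl) k
  calc Nat.factorial k * m ^ k ∣ Nat.uniformBell k m * Nat.factorial m ^ k * Nat.factorial k := by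
        obtain ⟨c, hc⟩ := hdvd
        exact ⟨Nat.uniformBell k m * c, by rw [hc]; ring⟩
    _ = Nat.factorial (k * m) := h

lemma auxB (k m : ℕ) (hk : 0 < k) (hm : 3 ≤ m) :
    2 * (Nat.factorial k * m ^ k) ∣ Nat.factorial (k * m) := by
  have hm0 : m ≠ 0 := by omega
  have h := Nat.uniformBell_mul_eq k hm0
  have h2 : 2 * m ∣ Nat.factorial m := by
    have : Nat.factorial 3 ∣ Nat.factorial m := Nat.factorial_dvd_factorial hm
    obtain ⟨c, hc⟩ := this
    have h3 : (2 : ℕ) ∣ Nat.factorial (m - 1) := by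
      have : Nat.factorial 2 ∣ Nat.factorial (m - 1) := Nat.factorial_dvd_factorial (by omega)
      simpa using this
    obtain ⟨d, hd⟩ := h3
    have hms : m = (m - 1) + 1 := by omega
    refine ⟨d, ?_⟩
    rw [hms, Nat.factorial_succ]
    rw [show m - 1 + 1 = m from by omega, hd]; ring
  have hdvd : 2 * m ^ k ∣ Nat.factorial m ^ k := by
    obtain ⟨c, hc⟩ := h2
    have h1 : 2 * m ^ k ∣ (2 * m) ^ k := by
      rw [mul_pow]
      exact mul_dvd_mul (dvd_pow_self 2 hk.ne') dvd_rfl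
    have h2' : (2 * m) ^ k ∣ Nat.factorial m ^ k :=
      pow_dvd_pow_of_dvd ⟨c, hc⟩ k
    exact h1.trans h2'
  calc 2 * (Nat.factorial k * m ^ k)
      ∣ Nat.uniformBell k m * Nat.factorial m ^ k * Nat.factorial k := by
        obtain ⟨c, hc⟩ := hdvd
        exact ⟨Nat.uniformBell k m * c, by rw [hc]; ring⟩
    _ = Nat.factorial (k * m) := h

theorem statement_3 (r : ℕ) (m k : Fin r → ℕ) (hm : ∀ i, 0 < m i) (hk : ∀ i, 0 < k i)
    (hj : ∃ j, 3 ≤ m j) :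
    2 * ∏ i, Nat.factorial (k i) * m i ^ k i ∣ Nat.factorial (∑ i, k i * m i) := by
  obtain ⟨j, hj3⟩ := hj
  have step1 : 2 * ∏ i, Nat.factorial (k i) * m i ^ k i ∣ ∏ i, Nat.factorial (k i * m i) := by
    rw [← Finset.prod_erase_mul Finset.univ _ (Finset.mem_univ j),
        ← Finset.prod_erase_mul Finset.univ (fun i => Nat.factorial (k i * m i))
          (Finset.mem_univ j), mul_comm (2 : ℕ), mul_assoc]
    exact mul_dvd_mul
      (Finset.prod_dvd_prod_of_dvd _ _ (fun i _ => auxA (k i) (m i) (hm i)))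
      (by rw [mul_comm]; exact auxB (k j) (m j) (hk j) hj3)
  exact step1.trans (Nat.prod_factorial_dvd_factorial_sum _ _)
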